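/- arXiv:1210.3671 — 5 statements merged into one kernel-verified Lean document; each statement's English description precedes it below -/
import Mathlib

section
/- Every torsion-free nilpotent group is left-orderable. -/
/-!
Induct on the nilpotency class, passing from `G` to `G ⧸ Z(G)`. A left order is the same as a
positive cone, and positive cones of a normal subgroup `N` and of `G ⧸ N` combine
lexicographically into one of `G`; so it suffices that `Z(G)` and `G ⧸ Z(G)` are again
torsion-free. For the abelian group `Z(G)` this is clear, and it embeds in its divisible hull,
a `ℚ`-vector space, hence in a lexicographically ordered `ι →₀ ℚ`.

For `G ⧸ Z(G)` write `ζ k` for the upper central series. If `x ∈ ζ (k + 1)` then `⁅x, y⁆` is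
central modulo `ζ k`, so `⁅x ^ n, y⁆ ≡ ⁅x, y⁆ ^ n`; hence `x ^ n ∈ ζ k` forces `x ∈ ζ k` by
induction on `k`, starting from torsion-freeness at `k = 0`. Descending from `ζ c = G` shows
that `x ^ n ∈ Z(G)` implies `x ∈ Z(G)`.
-/

/-- A group is left-orderable if it admits a left-invariant strict total order. -/
def LeftOrderable (G : Type*) [Group G] : Prop :=
  ∃ r : G → G → Prop, IsStrictTotalOrder G r ∧ ∀ a b c : G, r a b → r (c * a) (c * b)

/-- A monoid is torsion-free if every non-identity element has infinite order
(the definition `Monoid.IsTorsionFree` of the older Mathlib, since removed). -/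
def Monoid.IsTorsionFree (G : Type*) [Monoid G] : Prop :=
  ∀ g : G, g ≠ 1 → ¬IsOfFinOrder g

universe u

open scoped commutatorElement

section PositiveCone

variable {G : Type*} [Group G]

structure IsPositiveCone (P : Set G) : Prop where
  mul_mem {a b : G} : a ∈ P → b ∈ P → a * b ∈ P
  one_notMem : (1 : G) ∉ P
  mem_or_inv_mem {g : G} : g ≠ 1 → g ∈ P ∨ g⁻¹ ∈ P

theorem leftOrderable_iff_exists_isPositiveCone :
    LeftOrderable G ↔ ∃ P : Set G, IsPositiveCone P := by
  constructor
  · rintro ⟨r, hr, hinv⟩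
    refine ⟨{g | r 1 g}, fun {a b} ha hb => ?_, irrefl_of r 1, fun {g} hg => ?_⟩
    · exact _root_.trans_of r ha (by simpa using hinv 1 b a hb)
    · rcases trichotomous_of r 1 g with h | h | h
      · exact .inl h
      · exact absurd h.symm hg
      · exact .inr (by simpa using hinv g 1 g⁻¹ h)
  · rintro ⟨P, hP⟩
    refine ⟨fun a b => a⁻¹ * b ∈ P, ?_, fun a b c h => by simpa [mul_assoc] using h⟩
    exact
      { trichotomous := fun a b hab hba => by
          by_contra hne
          rcases hP.mem_or_inv_mem (mt inv_mul_eq_one.1 hne) with h | h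
          · exact hab h
          · exact hba (by simpa using h)
        irrefl := fun a h => hP.one_notMem (by simpa using h)
        trans := fun a b c hab hbc => by simpa [mul_assoc] using hP.mul_mem hab hbc }

theorem LeftOrderable.of_subsingleton [Subsingleton G] : LeftOrderable G :=
  leftOrderable_iff_exists_isPositiveCone.2
    ⟨∅, fun ha _ => ha, id, fun hg => absurd (Subsingleton.elim _ _) hg⟩

theorem LeftOrderable.of_injective {H : Type*} [Group H] [LinearOrder H] [MulLeftStrictMono H]
    (f : G →* H) (hf : Function.Injective f) : LeftOrderable G := by
  refine leftOrderable_iff_exists_isPositiveCone.2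
    ⟨{g | 1 < f g}, fun {a b} ha hb => ?_, by simp, fun {g} hg => ?_⟩
  · simpa using one_lt_mul' ha hb
  · have : f g ≠ 1 := (map_ne_one_iff f hf).2 hg
    rcases this.lt_or_gt with h | h
    · exact .inr (by simpa using one_lt_inv'.2 h)
    · exact .inl h

theorem IsPositiveCone.preimage_union_image {N : Subgroup G} [N.Normal] {P : Set N}
    {Q : Set (G ⧸ N)} (hP : IsPositiveCone P) (hQ : IsPositiveCone Q) :
    IsPositiveCone ((QuotientGroup.mk ⁻¹' Q) ∪ (Subtype.val '' P)) where
  mul_mem := by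
    rintro a b (ha | ⟨a, ha, rfl⟩) (hb | ⟨b, hb, rfl⟩)
    · exact .inl (hQ.mul_mem ha hb)
    · exact .inl (by simpa [QuotientGroup.mk_mul_of_mem _ b.2] using ha)
    · exact .inl (by
        rwa [Set.mem_preimage, QuotientGroup.mk_mul, (QuotientGroup.eq_one_iff _).2 a.2, one_mul])
    · exact .inr ⟨a * b, hP.mul_mem ha hb, rfl⟩
  one_notMem := by
    rintro (h | ⟨a, ha, h⟩)
    · exact hQ.one_notMem h
    · obtain rfl : a = 1 := Subtype.ext h
      exact hP.one_notMem ha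
  mem_or_inv_mem {g} hg := by
    by_cases hgN : (g : G ⧸ N) = 1
    · have hgN : g ∈ N := (QuotientGroup.eq_one_iff g).1 hgN
      rcases hP.mem_or_inv_mem (g := ⟨g, hgN⟩) (by simpa using hg) with h | h
      · exact .inl (.inr ⟨_, h, rfl⟩)
      · exact .inr (.inr ⟨_, h, rfl⟩)
    · rcases hQ.mem_or_inv_mem hgN with h | h
      · exact .inl (.inl h)
      · exact .inr (.inl h)

theorem LeftOrderable.of_subgroup_of_quotient (N : Subgroup G) [N.Normal] (hN : LeftOrderable N)
    (hQ : LeftOrderable (G ⧸ N)) : LeftOrderable G := by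
  obtain ⟨P, hP⟩ := leftOrderable_iff_exists_isPositiveCone.1 hN
  obtain ⟨Q, hQ⟩ := leftOrderable_iff_exists_isPositiveCone.1 hQ
  exact leftOrderable_iff_exists_isPositiveCone.2 ⟨_, hP.preimage_union_image hQ⟩

end PositiveCone

theorem IsAddTorsionFree.exists_injective_lex_finsupp_rat {M : Type u} [AddCommGroup M]
    [IsAddTorsionFree M] :
    ∃ (ι : Type u) (_ : LinearOrder ι) (f : M →+ Lex (ι →₀ ℚ)), Function.Injective f := by
  let b := Module.Basis.ofVectorSpace ℚ (DivisibleHull M)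
  let : LinearOrder (Module.Basis.ofVectorSpaceIndex ℚ (DivisibleHull M)) :=
    IsWellOrder.linearOrder WellOrderingRel
  refine ⟨_, inferInstance, AddMonoidHom.mk' (fun m => toLex (b.repr m)) fun m m' => ?_, ?_⟩
  · simp [DivisibleHull.coe_add]
  · exact toLex.injective.comp (b.repr.injective.comp DivisibleHull.coe_injective)

theorem LeftOrderable.of_isMulTorsionFree {A : Type*} [CommGroup A] [IsMulTorsionFree A] :
    LeftOrderable A := by
  obtain ⟨ι, _, f, hf⟩ :=
    IsAddTorsionFree.exists_injective_lex_finsupp_rat (M := Additive A)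
  exact LeftOrderable.of_injective (AddMonoidHom.toMultiplicative f) hf

section UpperCentralSeries

variable {G : Type*} [Group G]

theorem commutatorElement_pow_left_of_commute {a b : G} (h : Commute a ⁅a, b⁆) (n : ℕ) :
    ⁅a ^ n, b⁆ = ⁅a, b⁆ ^ n := by
  induction n with
  | zero => simp
  | succ n ih =>
    calc ⁅a ^ (n + 1), b⁆ = a * ⁅a ^ n, b⁆ * a⁻¹ * ⁅a, b⁆ := by
          simp only [commutatorElement_def]; group
      _ = ⁅a, b⁆ ^ (n + 1) := by rw [ih, (h.pow_right n).eq, mul_inv_cancel_right, pow_succ]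

theorem Monoid.IsTorsionFree.subgroup (hG : Monoid.IsTorsionFree G) (H : Subgroup G) :
    Monoid.IsTorsionFree H := fun g hg hfin =>
  hG g (by simpa using hg) (H.subtype_injective.isOfFinOrder_iff.2 hfin)

theorem mem_upperCentralSeries_of_pow_mem_of_mem_succ (hG : Monoid.IsTorsionFree G) {n : ℕ}
    (hn : n ≠ 0) : ∀ (k : ℕ) {x : G}, x ∈ Subgroup.upperCentralSeries G (k + 1) →
      x ^ n ∈ Subgroup.upperCentralSeries G k → x ∈ Subgroup.upperCentralSeries G k
  | 0, x, _, hxn => by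
    rw [Subgroup.upperCentralSeries_zero, Subgroup.mem_bot] at hxn ⊢
    by_contra hx
    exact hG x hx (isOfFinOrder_iff_pow_eq_one.2 ⟨n, Nat.pos_of_ne_zero hn, hxn⟩)
  | k + 1, x, hx, hxn => fun y => by
    refine mem_upperCentralSeries_of_pow_mem_of_mem_succ hG hn k (hx y) ?_
    let π := QuotientGroup.mk' (Subgroup.upperCentralSeries G k)
    have hcentral : π ⁅x, y⁆ ∈ Subgroup.center _ :=
      (Subgroup.upperCentralSeriesStep_eq_comap_center _).le (hx y)
    have hcomm : Commute (π x) ⁅π x, π y⁆ := by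
      rw [← map_commutatorElement]
      exact Subgroup.mem_center_iff.1 hcentral (π x)
    have hpow : π (⁅x, y⁆ ^ n) = π ⁅x ^ n, y⁆ := by
      simp only [map_pow, map_commutatorElement, commutatorElement_pow_left_of_commute hcomm]
    exact (QuotientGroup.eq_one_iff _).1 (hpow.trans ((QuotientGroup.eq_one_iff _).2 (hxn y)))

theorem mem_upperCentralSeries_of_pow_mem [Group.IsNilpotent G] (hG : Monoid.IsTorsionFree G)
    {n : ℕ} (hn : n ≠ 0) {k : ℕ} {x : G} (hxn : x ^ n ∈ Subgroup.upperCentralSeries G k) :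
    x ∈ Subgroup.upperCentralSeries G k := by
  have descend : ∀ j, x ∈ Subgroup.upperCentralSeries G (k + j) →
      x ∈ Subgroup.upperCentralSeries G k := by
    intro j
    induction j with
    | zero => exact id
    | succ j ih =>
      exact fun hx => ih <| mem_upperCentralSeries_of_pow_mem_of_mem_succ hG hn (k + j) hx <|
        Subgroup.upperCentralSeries_mono G (Nat.le_add_right k j) hxn
  obtain ⟨m, hm⟩ := Group.IsNilpotent.nilpotent G
  exact descend m <|
    Subgroup.upperCentralSeries_mono G (Nat.le_add_left m k) (hm ▸ Subgroup.mem_top x)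

theorem Monoid.IsTorsionFree.quotient_center [Group.IsNilpotent G]
    (hG : Monoid.IsTorsionFree G) :
    Monoid.IsTorsionFree (G ⧸ Subgroup.center G) := by
  intro g hg hfin
  obtain ⟨x, rfl⟩ := QuotientGroup.mk_surjective g
  obtain ⟨n, hn, hxn⟩ := isOfFinOrder_iff_pow_eq_one.1 hfin
  rw [← QuotientGroup.mk_pow, QuotientGroup.eq_one_iff, ← Subgroup.upperCentralSeries_one]
    at hxn
  rw [ne_eq, QuotientGroup.eq_one_iff, ← Subgroup.upperCentralSeries_one] at hg
  exact hg (mem_upperCentralSeries_of_pow_mem hG hn.ne' hxn)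

end UpperCentralSeries

/-- Every torsion-free nilpotent group is left-orderable. -/
theorem leftOrderable_of_torsionFree_nilpotent (G : Type*) [Group G]
    [Group.IsNilpotent G] (h : Monoid.IsTorsionFree G) : LeftOrderable G := by
  revert h
  refine Group.nilpotent_center_quotient_ind
    (P := fun G _ _ => Monoid.IsTorsionFree G → LeftOrderable G) G
    (fun _ _ _ _ => LeftOrderable.of_subsingleton) fun H _ _ ih hH => ?_
  open IsMulCommutative in
  have : IsMulTorsionFree (Subgroup.center H) := .of_not_isOfFinOrder (hH.subgroup _)
  open IsMulCommutative in
  exact .of_subgroup_of_quotient _ .of_isMulTorsionFree (ih hH.quotient_center)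
end

section
/- A group Γ is left-orderable if and only if, for every finite list g₁,…,gₙ of nontrivial elements of Γ, there exist signs ε₁,…,εₙ ∈ {±1} such that the subsemigroup generated by {g₁^{ε₁},…,gₙ^{εₙ}} does not contain the identity element. -/
open Filter

section

variable {G : Type*} [Group G]

namespace Subsemigroup

def IsConeOn (P : Subsemigroup G) (s : Set G) : Prop :=
  (1 : G) ∉ P ∧ ∀ x ∈ s, x ≠ 1 → x ∈ P ∨ x⁻¹ ∈ P

theorem IsConeOn.mono {P : Subsemigroup G} {s t : Set G} (hP : P.IsConeOn t) (hst : s \ {1} ⊆ t) :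
    P.IsConeOn s :=
  ⟨hP.1, fun x hx hx1 => hP.2 x (hst ⟨hx, hx1⟩) hx1⟩

end Subsemigroup

open Subsemigroup

theorem LeftOrderable.exists_isConeOn_univ (h : LeftOrderable G) :
    ∃ P : Subsemigroup G, P.IsConeOn Set.univ := by
  obtain ⟨r, hr, hl⟩ := h
  refine ⟨⟨{x | r 1 x}, fun {a b} ha hb => hr.trans _ _ _ ha (by simpa using hl 1 b a hb)⟩,
    hr.irrefl 1, fun x _ hx => ?_⟩
  rcases trichotomous_of r 1 x with h | h | h
  · exact Or.inl h
  · exact absurd h.symm hx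
  · exact Or.inr (by simpa using hl x 1 x⁻¹ h)

theorem leftOrderable_of_isConeOn_univ {P : Subsemigroup G} (hP : P.IsConeOn Set.univ) :
    LeftOrderable G := by
  refine ⟨fun a b => a⁻¹ * b ∈ P, { trichotomous := ?_, irrefl := ?_, trans := ?_ }, ?_⟩
  · intro a b hab hba
    by_contra hne
    rcases hP.2 (a⁻¹ * b) trivial (by simpa [inv_mul_eq_one] using hne) with h | h
    · exact hab h
    · exact hba (by simpa using h)
  · intro a h
    exact hP.1 (by simpa using h)
  · intro a b c hab hbc
    simpa [mul_assoc] using mul_mem hab hbc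
  · intro a b c h
    simpa [mul_assoc] using h

theorem leftOrderable_iff_exists_isConeOn_univ :
    LeftOrderable G ↔ ∃ P : Subsemigroup G, P.IsConeOn Set.univ :=
  ⟨LeftOrderable.exists_isConeOn_univ, fun ⟨_, hP⟩ => leftOrderable_of_isConeOn_univ hP⟩

theorem Subsemigroup.IsConeOn.exists_signs {P : Subsemigroup G} {n : ℕ} {g : Fin n → G}
    (hP : P.IsConeOn (Set.range g)) (hg : ∀ i, g i ≠ 1) :
    ∃ ε : Fin n → ℤ, (∀ i, ε i = 1 ∨ ε i = -1) ∧
      (1 : G) ∉ closure (Set.range fun i => g i ^ ε i) := by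
  classical
  refine ⟨fun i => if g i ∈ P then 1 else -1, fun i => by dsimp only; split_ifs <;> simp,
    fun h1 => hP.1 (closure_le.2 ?_ h1)⟩
  rintro _ ⟨i, rfl⟩
  by_cases hi : g i ∈ P
  · simp [hi]
  · simpa [hi] using (hP.2 (g i) ⟨i, rfl⟩ (hg i)).resolve_left hi

theorem isConeOn_closure_signs {n : ℕ} {g : Fin n → G} {ε : Fin n → ℤ}
    (hε : ∀ i, ε i = 1 ∨ ε i = -1) (h1 : (1 : G) ∉ closure (Set.range fun i => g i ^ ε i)) :
    (closure (Set.range fun i => g i ^ ε i)).IsConeOn (Set.range g) := by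
  refine ⟨h1, ?_⟩
  rintro _ ⟨i, rfl⟩ -
  have hi : g i ^ ε i ∈ closure (Set.range fun i => g i ^ ε i) := subset_closure ⟨i, rfl⟩
  rcases hε i with h | h <;> simp only [h, zpow_one, zpow_neg] at hi
  exacts [Or.inl hi, Or.inr hi]

theorem exists_isConeOn_finset_of_signs
    (h : ∀ (n : ℕ) (g : Fin n → G), (∀ i, g i ≠ 1) →
        ∃ ε : Fin n → ℤ, (∀ i, ε i = 1 ∨ ε i = -1) ∧
          (1 : G) ∉ closure (Set.range fun i => g i ^ ε i))
    (F : Finset G) : ∃ P : Subsemigroup G, P.IsConeOn F := by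
  classical
  set s := F.filter (· ≠ 1)
  let g : Fin s.card → G := fun i => s.equivFin.symm i
  have hg : ∀ i, g i ≠ 1 := fun i => (Finset.mem_filter.1 (s.equivFin.symm i).2).2
  obtain ⟨ε, hε, h1⟩ := h _ g hg
  refine ⟨_, (isConeOn_closure_signs hε h1).mono ?_⟩
  rintro x ⟨hx, hx1 : x ≠ 1⟩
  exact ⟨s.equivFin ⟨x, Finset.mem_filter.2 ⟨hx, hx1⟩⟩, by simp [g]⟩

theorem exists_isConeOn_univ_of_forall_finset
    (h : ∀ F : Finset G, ∃ P : Subsemigroup G, P.IsConeOn F) :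
    ∃ P : Subsemigroup G, P.IsConeOn Set.univ := by
  choose P hP using h
  let U : Ultrafilter (Finset G) := .of atTop
  refine ⟨⟨{x | ∀ᶠ F in U, x ∈ P F}, fun ha hb => (ha.and hb).mono fun F h => mul_mem h.1 h.2⟩,
    fun h1 => ?_, fun x _ hx => ?_⟩
  · obtain ⟨F, hF⟩ := h1.exists
    exact (hP F).1 hF
  · have hx_mem : ∀ᶠ F in (U : Filter (Finset G)), x ∈ F :=
      Ultrafilter.of_le _ ((eventually_ge_atTop {x}).mono fun _ => Finset.singleton_subset_iff.1)
    exact Ultrafilter.eventually_or.1 (hx_mem.mono fun F hF => (hP F).2 x hF hx)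

end

/-- A group is left-orderable iff for every finite list of nontrivial elements there
is a choice of signs such that the subsemigroup generated by the correspondingly
signed powers does not contain the identity. -/
theorem leftOrderable_iff_signs (G : Type*) [Group G] :
    LeftOrderable G ↔
      ∀ (n : ℕ) (g : Fin n → G), (∀ i, g i ≠ 1) →
        ∃ ε : Fin n → ℤ, (∀ i, ε i = 1 ∨ ε i = -1) ∧
          (1 : G) ∉ Subsemigroup.closure (Set.range fun i => g i ^ ε i) := by
  rw [leftOrderable_iff_exists_isConeOn_univ]
  constructor
  · rintro ⟨P, hP⟩ n g hg
    exact (hP.mono (Set.subset_univ _)).exists_signs hg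
  · intro h
    exact exists_isConeOn_univ_of_forall_finset (exists_isConeOn_finset_of_signs h)
end

section
/- If for every nontrivial element g of a group Γ there is a left-orderable group H and a homomorphism φ : Γ → H with φ(g) ≠ e, then Γ is left-orderable (i.e., residually left-orderable groups are left-orderable). -/
/-!
The maps `φ_g`, one for each `g ≠ 1`, assemble into an injective homomorphism of `G` into the
product `∏_{g ≠ 1} H_g`. After well-ordering the index set, the lexicographic order on this
product (compare at the first coordinate where two elements differ) is a strict total order, and
it is left-invariant because left multiplication acts coordinatewise, preserving both the set of
coordinates where two elements agree and each factor's order. Pulling it back along the embedding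
orders `G`.
-/

namespace Pi

variable {ι : Type*} {β : ι → Type*}

theorem isStrictTotalOrder_lex (r : ι → ι → Prop) [IsWellOrder ι r]
    (s : ∀ i, β i → β i → Prop) [∀ i, IsStrictTotalOrder (β i) (s i)] :
    IsStrictTotalOrder (∀ i, β i) (Pi.Lex r fun {i} => s i) where
  toTrichotomous := trichotomous_lex r _ IsWellFounded.wf
  irrefl := fun x ⟨i, _, hi⟩ => irrefl (r := s i) (x i) hi
  trans := by
    rintro x y z ⟨i, hxy, hi⟩ ⟨j, hyz, hj⟩
    rcases trichotomous_of r i j with hij | rfl | hji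
    · exact ⟨i, fun k hk => (hxy k hk).trans (hyz k (_root_.trans hk hij)), hyz i hij ▸ hi⟩
    · exact ⟨i, fun k hk => (hxy k hk).trans (hyz k hk), _root_.trans hi hj⟩
    · exact ⟨j, fun k hk => (hxy k (_root_.trans hk hji)).trans (hyz k hk), (hxy j hji).symm ▸ hj⟩

end Pi

namespace LeftOrderable

theorem of_injective_s9 {G H : Type*} [Group G] [Group H] (f : G →* H) (hf : Function.Injective f)
    (hH : LeftOrderable H) : LeftOrderable G := by
  obtain ⟨r, hr, hinv⟩ := hH
  refine ⟨fun a b => r (f a) (f b), (RelEmbedding.preimage ⟨f, hf⟩ r).isStrictTotalOrder, ?_⟩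
  intro a b c hab
  simpa only [map_mul] using hinv _ _ (f c) hab

theorem pi {ι : Type*} {H : ι → Type*} [∀ i, Group (H i)] (hH : ∀ i, LeftOrderable (H i)) :
    LeftOrderable (∀ i, H i) := by
  choose r hr hinv using hH
  refine ⟨Pi.Lex WellOrderingRel fun {i} => r i,
    Pi.isStrictTotalOrder_lex WellOrderingRel r, ?_⟩
  rintro a b c ⟨i, hagree, hi⟩
  exact ⟨i, fun j hj => congrArg (c j * ·) (hagree j hj), hinv i _ _ (c i) hi⟩

end LeftOrderable

/-- Residually left-orderable groups are left-orderable: if every nontrivial element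
has a homomorphic image that is nontrivial in some left-orderable group, then the
group is left-orderable. -/
theorem leftOrderable_of_residually {G : Type*} [Group G]
    (h : ∀ g : G, g ≠ 1 → ∃ (H : Type) (_ : Group H) (φ : G →* H),
      LeftOrderable H ∧ φ g ≠ 1) :
    LeftOrderable G := by
  choose H _ φ hH hφ using h
  let Φ : G →* ∀ g : {g : G // g ≠ 1}, H g g.2 := MonoidHom.pi fun g => φ g g.2
  have hΦ : Function.Injective Φ := (injective_iff_map_eq_one Φ).2 fun g hg => by
    by_contra hg1
    exact hφ g hg1 (congrFun hg ⟨g, hg1⟩)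
  exact LeftOrderable.of_injective_s9 Φ hΦ (LeftOrderable.pi fun g => hH g g.2)
end

section
/- If a group Γ is the product of finitely many cyclic subgroups, Γ = H₁H₂⋯Hₖ, and n is a positive integer, then the subgroup generated by all n-th powers {gⁿ : g ∈ Γ} has finite index in Γ. -/
/-- If a group is a product of finitely many cyclic subgroups, then for any positive
integer `n` the subgroup generated by all `n`-th powers has finite index. -/
theorem nth_powers_finiteIndex {G : Type*} [Group G] (k : ℕ)
    (H : Fin k → Subgroup G) (hcyc : ∀ i, IsCyclic (H i))
    (hprod : ∀ g : G, ∃ h : Fin k → G, (∀ i, h i ∈ H i) ∧ (List.ofFn h).prod = g)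
    (n : ℕ) (hn : 0 < n) :
    (Subgroup.closure {x : G | ∃ g : G, g ^ n = x}).FiniteIndex := by
  haveI : NeZero n := ⟨hn.ne'⟩
  set S : Set G := {x : G | ∃ g : G, g ^ n = x} with hS
  set N : Subgroup G := Subgroup.closure S with hN
  haveI hnorm : N.Normal := by
    constructor
    intro x hx g
    induction hx using Subgroup.closure_induction with
    | mem y hy =>
      obtain ⟨z, rfl⟩ := hy
      exact Subgroup.subset_closure ⟨g * z * g⁻¹, by
        rw [conj_pow]⟩
    | one => simpa using N.one_mem
    | mul a b _ _ ha hb =>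
      have := N.mul_mem ha hb
      simpa [mul_assoc] using this
    | inv a _ ha =>
      have := N.inv_mem ha
      simpa [mul_assoc] using this
  -- every element of the quotient has order dividing n
  have hpow : ∀ g : G, (QuotientGroup.mk g : G ⧸ N) ^ n = 1 := by
    intro g
    rw [← QuotientGroup.mk_pow, QuotientGroup.eq_one_iff]
    exact Subgroup.subset_closure ⟨g, rfl⟩
  -- key: for x in quotient with x^n = 1, zpow m = pow of (m : ZMod n).val
  have key : ∀ (x : G ⧸ N) (m : ℤ), x ^ n = 1 → x ^ m = x ^ ((m : ZMod n).val) := by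
    intro x m hx
    have hmod : (((m : ZMod n).val : ℤ) : ZMod n) = (m : ZMod n) := by
      simp [ZMod.natCast_val, ZMod.intCast_cast]
    rw [ZMod.intCast_eq_intCast_iff] at hmod
    obtain ⟨t, ht⟩ := hmod.symm.dvd
    have hm2 : m = ((m : ZMod n).val : ℤ) - n * t := by omega
    conv_lhs => rw [hm2]
    rw [zpow_sub, zpow_mul, zpow_natCast x n, hx, one_zpow, inv_one, mul_one, zpow_natCast]
  -- choose generators of the cyclic subgroups
  have hc : ∀ i, ∃ c : G, c ∈ H i ∧ ∀ x ∈ H i, ∃ m : ℤ, c ^ m = x := by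
    intro i
    obtain ⟨⟨c, hc⟩, hgen⟩ := (hcyc i).exists_generator
    refine ⟨c, hc, fun x hx => ?_⟩
    obtain ⟨m, hm⟩ := hgen ⟨x, hx⟩
    exact ⟨m, by simpa using congrArg Subtype.val hm⟩
  choose c hcmem hcgen using hc
  -- surjection from a finite type onto the quotient
  have hsurj : Function.Surjective
      (fun a : Fin k → ZMod n =>
        (List.ofFn fun i => (QuotientGroup.mk (c i) : G ⧸ N) ^ (a i).val).prod) := by
    intro q
    obtain ⟨g, rfl⟩ := QuotientGroup.mk_surjective q
    obtain ⟨h, hmem, hprodg⟩ := hprod g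
    choose m hm using fun i => hcgen i (h i) (hmem i)
    refine ⟨fun i => ((m i : ZMod n)), ?_⟩
    have hfac : ∀ i, (QuotientGroup.mk (c i) : G ⧸ N) ^ ((m i : ZMod n)).val
        = QuotientGroup.mk (h i) := by
      intro i
      rw [← key _ _ (hpow (c i)), ← QuotientGroup.mk_zpow, hm]
    have : (QuotientGroup.mk ((List.ofFn h).prod) : G ⧸ N) =
        (List.ofFn fun i => (QuotientGroup.mk (c i) : G ⧸ N) ^ ((m i : ZMod n)).val).prod := by
      rw [← QuotientGroup.mk'_apply, map_list_prod, List.map_ofFn]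
      refine congrArg (fun l => List.prod (List.ofFn l)) (funext fun i => ?_)
      simpa [Function.comp, QuotientGroup.mk'_apply] using (hfac i).symm
    simpa [hprodg] using this.symm
  haveI : Finite (G ⧸ N) := Finite.of_surjective _ hsurj
  exact N.finiteIndex_of_finite_quotient
end

section
/- If a group Γ admits a left-invariant mean on bounded real-valued functions and acts by homeomorphisms on a nonempty compact metric space X, then there exists a Γ-invariant Borel probability measure on X. -/
/-!
Averaging a continuous function along the orbit of a point with the mean,
`f ↦ A (g ↦ f (g • x₀))`, is a positive normalized linear functional on `C(X, ℝ)`; the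
Riesz–Markov–Kakutani theorem turns it into a Borel probability measure. Left invariance of the
mean makes this functional invariant under precomposition with `x ↦ g • x`, so the pushforward of
the measure under `x ↦ g • x` has the same integrals of bounded continuous functions, hence equals
it, since a finite Borel measure on a metric space is determined by those integrals.
-/

open MeasureTheory CompactlySupported CompactlySupportedContinuousMap

section RieszMeasure

variable {X : Type*} [TopologicalSpace X] [T2Space X] [CompactSpace X]
  [MeasurableSpace X] [BorelSpace X]

theorem RealRMK.isProbabilityMeasure_rieszMeasure (Λ : C_c(X, ℝ) →ₚ[ℝ] ℝ)
    (hΛ : Λ (continuousMapEquiv 1) = 1) :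
    IsProbabilityMeasure (RealRMK.rieszMeasure Λ) := by
  have h := RealRMK.integral_rieszMeasure Λ (continuousMapEquiv 1)
  simp only [continuousMapEquiv_apply_toFun, ContinuousMap.one_apply, integral_const,
    smul_eq_mul, mul_one, hΛ] at h
  constructor
  simpa [measureReal_def, ENNReal.toReal_eq_one_iff] using h

theorem RealRMK.map_rieszMeasure_eq_self [TopologicalSpace.PseudoMetrizableSpace X]
    (Λ : C_c(X, ℝ) →ₚ[ℝ] ℝ) {T : X → X} (hT : Continuous T)
    (hΛ : ∀ f f' : C_c(X, ℝ), (∀ x, f' x = f (T x)) → Λ f' = Λ f) :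
    (RealRMK.rieszMeasure Λ).map T = RealRMK.rieszMeasure Λ := by
  refine ext_of_forall_integral_eq_of_IsFiniteMeasure fun f => ?_
  let fc := continuousMapEquiv f.toContinuousMap
  let fTc := continuousMapEquiv (f.toContinuousMap.comp ⟨T, hT⟩)
  calc ∫ x, f x ∂(RealRMK.rieszMeasure Λ).map T
      = ∫ x, fTc x ∂(RealRMK.rieszMeasure Λ) :=
        integral_map hT.aemeasurable f.continuous.aestronglyMeasurable
    _ = ∫ x, fc x ∂(RealRMK.rieszMeasure Λ) := by
        rw [RealRMK.integral_rieszMeasure, RealRMK.integral_rieszMeasure,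
          hΛ fc fTc fun _ => rfl]
    _ = ∫ x, f x ∂(RealRMK.rieszMeasure Λ) := rfl

end RieszMeasure

theorem CompactlySupportedContinuousMap.exists_abs_comp_le {X ι : Type*} [TopologicalSpace X]
    (f : C_c(X, ℝ)) (φ : ι → X) : ∃ C, ∀ i, |f (φ i)| ≤ C :=
  let ⟨C, hC⟩ := f.hasCompactSupport.exists_bound_of_continuous f.continuous
  ⟨C, fun i => hC (φ i)⟩

section OrbitFunctional

variable {G X : Type*} [Group G] [TopologicalSpace X] [MulAction G X] {A : (G → ℝ) → ℝ}
  (hadd : ∀ f₁ f₂ : G → ℝ, (∃ C, ∀ x, |f₁ x| ≤ C) → (∃ C, ∀ x, |f₂ x| ≤ C) →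
    A (f₁ + f₂) = A f₁ + A f₂)
  (hsmul : ∀ (c : ℝ) (f : G → ℝ), (∃ C, ∀ x, |f x| ≤ C) → A (c • f) = c * A f)
  (hpos : ∀ f : G → ℝ, (∃ C, ∀ x, |f x| ≤ C) → (∀ x, 0 ≤ f x) → 0 ≤ A f)

noncomputable def orbitFunctional (x₀ : X) : C_c(X, ℝ) →ₚ[ℝ] ℝ :=
  PositiveLinearMap.mk₀
    { toFun f := A fun g => f (g • x₀)
      map_add' f f' := hadd _ _ (f.exists_abs_comp_le _) (f'.exists_abs_comp_le _)
      map_smul' c f := hsmul c _ (f.exists_abs_comp_le _) }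
    fun f hf => hpos _ (f.exists_abs_comp_le _) fun g => hf (g • x₀)

theorem orbitFunctional_apply (x₀ : X) (f : C_c(X, ℝ)) :
    orbitFunctional hadd hsmul hpos x₀ f = A fun g => f (g • x₀) := rfl

theorem orbitFunctional_eq_of_eq_comp_smul
    (hinv : ∀ (f : G → ℝ), (∃ C, ∀ x, |f x| ≤ C) → ∀ g : G, A (fun x => f (g * x)) = A f)
    (x₀ : X) (g : G) {f f' : C_c(X, ℝ)} (hff' : ∀ x, f' x = f (g • x)) :
    orbitFunctional hadd hsmul hpos x₀ f' = orbitFunctional hadd hsmul hpos x₀ f := by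
  simp only [orbitFunctional_apply, hff', smul_smul]
  exact hinv (fun k => f (k • x₀)) (f.exists_abs_comp_le _) g

end OrbitFunctional

/-- If a group admits a left-invariant mean on bounded real-valued functions and acts
by homeomorphisms on a nonempty compact metric space, then there is an invariant
Borel probability measure on the space. -/
theorem exists_invariant_measure_of_mean {G X : Type*} [Group G] [MetricSpace X]
    [CompactSpace X] [Nonempty X] [MeasurableSpace X] [BorelSpace X]
    [MulAction G X] (hcont : ∀ g : G, Continuous (fun x : X => g • x))
    (A : (G → ℝ) → ℝ)
    (hadd : ∀ f₁ f₂ : G → ℝ, (∃ C, ∀ x, |f₁ x| ≤ C) → (∃ C, ∀ x, |f₂ x| ≤ C) →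
      A (f₁ + f₂) = A f₁ + A f₂)
    (hsmul : ∀ (c : ℝ) (f : G → ℝ), (∃ C, ∀ x, |f x| ≤ C) → A (c • f) = c * A f)
    (hone : A (fun _ => 1) = 1)
    (hpos : ∀ f : G → ℝ, (∃ C, ∀ x, |f x| ≤ C) → (∀ x, 0 ≤ f x) → 0 ≤ A f)
    (hinv : ∀ (f : G → ℝ), (∃ C, ∀ x, |f x| ≤ C) →
      ∀ g : G, A (fun x => f (g * x)) = A f) :
    ∃ μ : Measure X, IsProbabilityMeasure μ ∧
      ∀ (g : G) (s : Set X), MeasurableSet s → μ ((fun x : X => g • x) ⁻¹' s) = μ s := by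
  obtain ⟨x₀⟩ := ‹Nonempty X›
  let Λ := orbitFunctional hadd hsmul hpos x₀
  refine ⟨RealRMK.rieszMeasure Λ, RealRMK.isProbabilityMeasure_rieszMeasure Λ hone,
    fun g s hs => ?_⟩
  rw [← Measure.map_apply (hcont g).measurable hs, RealRMK.map_rieszMeasure_eq_self Λ (hcont g)
    fun f f' => orbitFunctional_eq_of_eq_comp_smul hadd hsmul hpos hinv x₀ g]
end
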